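/- arXiv:1206.4956 — 3 statements merged into one kernel-verified Lean document; each statement's English description precedes it below -/
import Mathlib

section
/- The trajectory moment generating function started from a Fock state reduces to a classical deformed Markov chain: for every s ∈ ℝ, every n ≥ 1 and every k ∈ ℕ, ∑_{(i₁,…,iₙ) ∈ {1,2}ⁿ} exp(s · #{j : iⱼ = 1}) · ‖K_{iₙ} ⋯ K_{i₁} e_k‖² = (M_sⁿ 𝟙)(k), where M_s is the operator acting on bounded functions f : ℕ → ℝ by (M_s f)(k) = eˢ sin²(φ√(k+1)) f(k+1) + cos²(φ√(k+1)) f(k), and 𝟙 denotes the constant function 1. -/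
noncomputable section

abbrev H : Type := lp (fun _ : ℕ => ℂ) 2

/-- The canonical (Fock) basis vector `e_n`. -/
noncomputable def fock (n : ℕ) : H := lp.single 2 n 1

/-- The unnormalized post-measurement vector `K_{iₙ} ⋯ K_{i₂} K_{i₁} ψ` associated to a
detection record `i = (i₁, …, iₙ) ∈ {1,2}ⁿ` (outcome `0 : Fin 2` stands for a ground-state
detection, i.e. `K₁`, and `1 : Fin 2` for an excited-state detection, i.e. `K₂`). -/
noncomputable def applyTraj (K₁ K₂ : H →L[ℂ] H) : {n : ℕ} → (Fin n → Fin 2) → H → H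
  | 0, _, ψ => ψ
  | n + 1, i, ψ =>
      applyTraj K₁ K₂ (fun j : Fin n => i j.succ) ((if i 0 = 0 then K₁ else K₂) ψ)

/-- The classical deformed Markov transition operator
`(M_s f)(k) = eˢ sin²(φ√(k+1)) f(k+1) + cos²(φ√(k+1)) f(k)`. -/
noncomputable def deformedMarkov (φ s : ℝ) (f : ℕ → ℝ) : ℕ → ℝ := fun k =>
  Real.exp s * Real.sin (φ * Real.sqrt (k + 1)) ^ 2 * f (k + 1) +
    Real.cos (φ * Real.sqrt (k + 1)) ^ 2 * f k

/-! Both Kraus operators send a Fock vector to a real multiple of a Fock vector (`K₁` raises the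
index, `K₂` keeps it). Splitting off the first outcome of a record therefore turns the trajectory
generating function started at `e_k` into `eˢ sin² · (value at e_{k+1}) + cos² · (value at e_k)`,
which is one application of `M_s`; induction on the record length finishes. -/

lemma Fin.sum_univ_fun_succ {α M : Type*} [Fintype α] [AddCommMonoid M] {n : ℕ}
    (f : (Fin (n + 1) → α) → M) :
    ∑ i, f i = ∑ a, ∑ i : Fin n → α, f (Fin.cons a i) := by
  rw [← (Fin.consEquiv fun _ => α).sum_comp, Fintype.sum_prod_type]
  rfl

lemma norm_fock (k : ℕ) : ‖fock k‖ = 1 := by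
  rw [fock, lp.norm_single (by norm_num)]
  simp

lemma applyTraj_smul (K₁ K₂ : H →L[ℂ] H) :
    ∀ {n : ℕ} (i : Fin n → Fin 2) (c : ℂ) (ψ : H),
      applyTraj K₁ K₂ i (c • ψ) = c • applyTraj K₁ K₂ i ψ
  | 0, _, _, _ => rfl
  | _ + 1, i, c, ψ => by rw [applyTraj, applyTraj, map_smul, applyTraj_smul]

lemma applyTraj_cons (K₁ K₂ : H →L[ℂ] H) {n : ℕ} (a : Fin 2) (i : Fin n → Fin 2) (ψ : H) :
    applyTraj K₁ K₂ (Fin.cons a i : Fin (n + 1) → Fin 2) ψ =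
      applyTraj K₁ K₂ i ((if a = 0 then K₁ else K₂) ψ) :=
  rfl

def trajMGF (K₁ K₂ : H →L[ℂ] H) (s : ℝ) (n : ℕ) (ψ : H) : ℝ :=
  ∑ i : Fin n → Fin 2,
    Real.exp (s * (Finset.univ.filter fun j => i j = 0).card) * ‖applyTraj K₁ K₂ i ψ‖ ^ 2

section trajMGF

variable (K₁ K₂ : H →L[ℂ] H) (s : ℝ)

lemma trajMGF_zero (ψ : H) : trajMGF K₁ K₂ s 0 ψ = ‖ψ‖ ^ 2 := by
  simp [trajMGF, applyTraj]

lemma trajMGF_smul (n : ℕ) (c : ℂ) (ψ : H) :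
    trajMGF K₁ K₂ s n (c • ψ) = ‖c‖ ^ 2 * trajMGF K₁ K₂ s n ψ := by
  simp only [trajMGF, applyTraj_smul, norm_smul, mul_pow, Finset.mul_sum]
  exact Finset.sum_congr rfl fun _ _ => by ring

lemma trajMGF_succ (n : ℕ) (ψ : H) :
    trajMGF K₁ K₂ s (n + 1) ψ =
      Real.exp s * trajMGF K₁ K₂ s n (K₁ ψ) + trajMGF K₁ K₂ s n (K₂ ψ) := by
  simp only [trajMGF, Fin.sum_univ_fun_succ, Fin.sum_univ_two, applyTraj_cons,
    Fin.card_filter_univ_succ', Fin.cons_zero, Fin.cons_succ, Finset.mul_sum]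
  simp [mul_add, Real.exp_add, mul_assoc]

lemma trajMGF_fock (φ : ℝ)
    (hK₁ : ∀ n : ℕ, K₁ (fock n) = ((Real.sin (φ * Real.sqrt (n + 1)) : ℝ) : ℂ) • fock (n + 1))
    (hK₂ : ∀ n : ℕ, K₂ (fock n) = ((Real.cos (φ * Real.sqrt (n + 1)) : ℝ) : ℂ) • fock n)
    (n k : ℕ) :
    trajMGF K₁ K₂ s n (fock k) = (deformedMarkov φ s)^[n] (fun _ => 1) k := by
  induction n generalizing k with
  | zero => simp [trajMGF_zero, norm_fock]
  | succ n ih =>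
    rw [trajMGF_succ, hK₁, hK₂, trajMGF_smul, trajMGF_smul, ih, ih,
      Function.iterate_succ_apply', deformedMarkov]
    simp only [Complex.norm_real, Real.norm_eq_abs, sq_abs]
    ring

end trajMGF

theorem traj_mgf_classical_general (φ : ℝ) (K₁ K₂ : H →L[ℂ] H)
    (hK₁ : ∀ n : ℕ, K₁ (fock n) =
      ((Real.sin (φ * Real.sqrt (n + 1)) : ℝ) : ℂ) • fock (n + 1))
    (hK₂ : ∀ n : ℕ, K₂ (fock n) =
      ((Real.cos (φ * Real.sqrt (n + 1)) : ℝ) : ℂ) • fock n)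
    (s : ℝ) (n : ℕ) (k : ℕ) :
    ∑ i : Fin n → Fin 2,
        Real.exp (s * (Finset.univ.filter fun j => i j = 0).card) *
          ‖applyTraj K₁ K₂ i (fock k)‖ ^ 2 =
      (deformedMarkov φ s)^[n] (fun _ => 1) k :=
  trajMGF_fock K₁ K₂ s φ hK₁ hK₂ n k

/-- The trajectory moment generating function started from a Fock state `e_k`
reduces to a classical deformed Markov chain:
`∑_{i ∈ {1,2}ⁿ} exp(s·#{j : iⱼ = 1})·‖K_{iₙ} ⋯ K_{i₁} e_k‖² = (M_sⁿ 𝟙)(k)`. -/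
theorem traj_mgf_classical (φ : ℝ) (K₁ K₂ : H →L[ℂ] H)
    (hK₁ : ∀ n : ℕ, K₁ (fock n) =
      ((Real.sin (φ * Real.sqrt (n + 1)) : ℝ) : ℂ) • fock (n + 1))
    (hK₂ : ∀ n : ℕ, K₂ (fock n) =
      ((Real.cos (φ * Real.sqrt (n + 1)) : ℝ) : ℂ) • fock n)
    (s : ℝ) (n : ℕ) (hn : 1 ≤ n) (k : ℕ) :
    ∑ i : Fin n → Fin 2,
        Real.exp (s * (Finset.univ.filter fun j => i j = 0).card) *
          ‖applyTraj K₁ K₂ i (fock k)‖ ^ 2 =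
      (deformedMarkov φ s)^[n] (fun _ => 1) k :=
  traj_mgf_classical_general φ K₁ K₂ hK₁ hK₂ s n k
end
end

section
/- The stationary rate of ground-state atom detections equals the excess mean photon number: the series ∑_{n≥0} n·π(n) and ∑_{n≥0} π(n)·sin²(φ√(n+1)) both converge, and N_ex · ∑_{n≥0} π(n)·sin²(φ√(n+1)) = ∑_{n≥0} n·π(n) − ν · ∑_{n≥0} π(n). -/
noncomputable section

/-- The unnormalized stationary weights
`π(n) = ∏_{k=1}^{n} (ν/(ν+1) + (N_ex/(ν+1))·sin²(φ√k)/k)`, with `π(0) = 1`. -/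
noncomputable def statWeight (Nex ν φ : ℝ) (n : ℕ) : ℝ :=
  ∏ k ∈ Finset.Icc 1 n,
    (ν / (ν + 1) + Nex / (ν + 1) * Real.sin (φ * Real.sqrt k) ^ 2 / k)

/-! The weights satisfy the detailed-balance relation
`(ν+1)(n+1)π(n+1) = (ν(n+1) + N_ex sin²(φ√(n+1))) π(n)`. Summing it over `n` and reindexing
`∑ (n+1)π(n+1) = ∑ nπ(n)` gives the identity. Convergence of `∑ nπ(n)` is the ratio test: the
ratio of consecutive terms tends to `ν/(ν+1) < 1`. -/

open Filter Topology

lemma summable_of_norm_succ_le_of_tendsto {E : Type*} [NormedAddCommGroup E] [CompleteSpace E]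
    {f : ℕ → E} {c : ℕ → ℝ} {l : ℝ} (hl : l < 1) (hc : Tendsto c atTop (𝓝 l))
    (hf : ∀ᶠ n in atTop, ‖f (n + 1)‖ ≤ c n * ‖f n‖) : Summable f := by
  obtain ⟨r, hlr, hr⟩ := exists_between hl
  refine summable_of_ratio_norm_eventually_le hr ?_
  filter_upwards [hf, hc.eventually (gt_mem_nhds hlr)] with n hfn hcn
  exact hfn.trans (mul_le_mul_of_nonneg_right hcn.le (norm_nonneg _))

lemma summable_of_summable_natCast_mul {f : ℕ → ℝ} (h : Summable fun n : ℕ => (n : ℝ) * f n) :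
    Summable f := by
  refine h.norm.of_norm_bounded_eventually_nat ?_
  filter_upwards [eventually_ge_atTop 1] with n hn
  rw [norm_mul, Real.norm_natCast]
  exact le_mul_of_one_le_left (norm_nonneg _) (by exact_mod_cast hn)

lemma tsum_add_one_mul_succ_sub {f : ℕ → ℝ} (hf : Summable fun n : ℕ => (n : ℝ) * f n) (a : ℝ) :
    ∑' n : ℕ, ((a + 1) * ((n + 1) * f (n + 1)) - a * ((n + 1) * f n)) =
      (∑' n : ℕ, (n : ℝ) * f n) - a * ∑' n : ℕ, f n := by
  have hmass := summable_of_summable_natCast_mul hf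
  have hshift : ∑' n : ℕ, ((n : ℝ) + 1) * f (n + 1) = ∑' n : ℕ, (n : ℝ) * f n := by
    simp [hf.tsum_eq_zero_add]
  have hsplit : ∑' n : ℕ, ((n : ℝ) + 1) * f n = (∑' n : ℕ, (n : ℝ) * f n) + ∑' n : ℕ, f n := by
    rw [← hf.tsum_add hmass]
    exact tsum_congr fun n => add_one_mul _ _
  have hsucc : Summable fun n : ℕ => ((n : ℝ) + 1) * f (n + 1) := by
    simpa using (summable_nat_add_iff 1).2 hf
  have hadd : Summable fun n : ℕ => ((n : ℝ) + 1) * f n :=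
    (hf.add hmass).congr fun n => (add_one_mul _ _).symm
  rw [(hsucc.mul_left _).tsum_sub (hadd.mul_left _), tsum_mul_left, tsum_mul_left, hshift, hsplit]
  ring

def statFactor (Nex ν φ : ℝ) (k : ℕ) : ℝ :=
  ν / (ν + 1) + Nex / (ν + 1) * Real.sin (φ * Real.sqrt k) ^ 2 / k

lemma statWeight_succ (Nex ν φ : ℝ) (n : ℕ) :
    statWeight Nex ν φ (n + 1) = statWeight Nex ν φ n * statFactor Nex ν φ (n + 1) :=
  Finset.prod_Icc_succ_top (Nat.le_add_left 1 n) _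

lemma tendsto_statFactor (Nex ν φ : ℝ) :
    Tendsto (statFactor Nex ν φ) atTop (𝓝 (ν / (ν + 1))) := by
  have hsin : Tendsto (fun k : ℕ => Real.sin (φ * Real.sqrt k) ^ 2 / k) atTop (𝓝 0) :=
    squeeze_zero (fun k => by positivity)
      (fun k => div_le_div_of_nonneg_right (Real.sin_sq_le_one _) k.cast_nonneg)
      tendsto_one_div_atTop_nhds_zero_nat
  have := (tendsto_const_nhds (x := ν / (ν + 1))).add (hsin.const_mul (Nex / (ν + 1)))
  rw [mul_zero, add_zero] at this
  exact this.congr fun k => by simp only [statFactor, mul_div_assoc]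

lemma summable_natCast_mul_statWeight (Nex : ℝ) {ν : ℝ} (hν : 0 ≤ ν) (φ : ℝ) :
    Summable fun n : ℕ => (n : ℝ) * statWeight Nex ν φ n := by
  have hlim : Tendsto (fun n : ℕ => (1 + 1 / (n : ℝ)) * |statFactor Nex ν φ (n + 1)|) atTop
      (𝓝 (ν / (ν + 1))) := by
    have := ((tendsto_const_nhds (x := (1 : ℝ))).add tendsto_one_div_atTop_nhds_zero_nat).mul
      ((tendsto_statFactor Nex ν φ).comp (tendsto_add_atTop_nat 1)).abs
    simpa [abs_of_nonneg (by positivity : 0 ≤ ν / (ν + 1))] using this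
  refine summable_of_norm_succ_le_of_tendsto ?_ hlim ?_
  · rw [div_lt_one (by positivity)]; linarith
  filter_upwards [eventually_ge_atTop 1] with n hn
  have hn0 : (n : ℝ) ≠ 0 := by positivity
  refine le_of_eq ?_
  rw [statWeight_succ]
  simp only [norm_mul, Real.norm_eq_abs, Nat.abs_cast]
  field_simp
  push_cast
  ring

lemma statWeight_succ_balance (Nex φ : ℝ) {ν : ℝ} (hν : ν + 1 ≠ 0) (n : ℕ) :
    Nex * (statWeight Nex ν φ n * Real.sin (φ * Real.sqrt (n + 1)) ^ 2) =
      (ν + 1) * ((n + 1) * statWeight Nex ν φ (n + 1)) - ν * ((n + 1) * statWeight Nex ν φ n) := by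
  rw [statWeight_succ, statFactor]
  push_cast
  field_simp
  ring

theorem stationary_count_rate_general (Nex ν φ : ℝ) (hν : 0 ≤ ν) :
    Summable (fun n : ℕ => (n : ℝ) * statWeight Nex ν φ n) ∧
    Summable (fun n : ℕ =>
      statWeight Nex ν φ n * Real.sin (φ * Real.sqrt (n + 1)) ^ 2) ∧
    Nex * ∑' n : ℕ, statWeight Nex ν φ n * Real.sin (φ * Real.sqrt (n + 1)) ^ 2 =
      (∑' n : ℕ, (n : ℝ) * statWeight Nex ν φ n) -
        ν * ∑' n : ℕ, statWeight Nex ν φ n := by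
  have hmean := summable_natCast_mul_statWeight Nex hν φ
  have hmass := summable_of_summable_natCast_mul hmean
  refine ⟨hmean, hmass.norm.of_norm_bounded fun n => ?_, ?_⟩
  · rw [norm_mul]
    exact mul_le_of_le_one_right (norm_nonneg _) (by simpa using Real.sin_sq_le_one _)
  rw [← tsum_mul_left, ← tsum_add_one_mul_succ_sub hmean ν]
  exact tsum_congr (statWeight_succ_balance Nex φ (by positivity))

/-- The stationary rate of ground-state atom detections equals the excess
mean photon number: the series `∑ n·π(n)` and `∑ π(n)·sin²(φ√(n+1))` converge, and
`N_ex·∑_{n≥0} π(n)·sin²(φ√(n+1)) = ∑_{n≥0} n·π(n) − ν·∑_{n≥0} π(n)`. -/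
theorem stationary_count_rate (Nex ν φ : ℝ) (hNex : 0 < Nex) (hν : 0 ≤ ν) :
    Summable (fun n : ℕ => (n : ℝ) * statWeight Nex ν φ n) ∧
    Summable (fun n : ℕ =>
      statWeight Nex ν φ n * Real.sin (φ * Real.sqrt (n + 1)) ^ 2) ∧
    Nex * ∑' n : ℕ, statWeight Nex ν φ n * Real.sin (φ * Real.sqrt (n + 1)) ^ 2 =
      (∑' n : ℕ, (n : ℝ) * statWeight Nex ν φ n) -
        ν * ∑' n : ℕ, statWeight Nex ν φ n :=
  stationary_count_rate_general Nex ν φ hν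
end
end

section
/- The off-diagonal part B of the restricted L²-generator is relatively bounded with respect to its diagonal part A: there exists b > 0 such that for every finitely supported sequence x : ℕ → ℝ, ∑_{j≥0} ( λ_j·μ_{j+1}·x_{j+1} + λ_{j−1}·μ_j·x_{j−1} )² ≤ b · ∑_{j≥0} ( λ_j² + μ_j² )² · x_j², with the conventions λ_{−1} = 0 and x_{−1} = 0 (here λ_k, μ_k ≥ 0 denote the nonnegative square roots of the rates). -/
noncomputable section

/-- Birth rates `λ_k² = N_ex·sin²(φ√(k+1)) + ν·(k+1)`. -/
noncomputable def lam2 (Nex ν φ : ℝ) (k : ℕ) : ℝ :=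
  Nex * Real.sin (φ * Real.sqrt (k + 1)) ^ 2 + ν * (k + 1)

/-- Death rates `μ_k² = (ν+1)·k` (so `μ_0 = 0`). -/
noncomputable def mu2 (ν : ℝ) (k : ℕ) : ℝ := (ν + 1) * k

/-- The nonnegative square root `λ_k` of the birth rate. -/
noncomputable def lam (Nex ν φ : ℝ) (k : ℕ) : ℝ := Real.sqrt (lam2 Nex ν φ k)

/-- The nonnegative square root `μ_k` of the death rate (so `μ_0 = 0`). -/
noncomputable def mu (ν : ℝ) (k : ℕ) : ℝ := Real.sqrt (mu2 ν k)

/-!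
`B` is the symmetric tridiagonal matrix with off-diagonal entries `w_k = λ_k μ_{k+1}`, so
`(Bx)_j² ≤ 2 w_j² x_{j+1}² + 2 w_{j-1}² x_{j-1}²`, and it suffices that `w_k²` is controlled by
both neighbouring diagonal entries `d_k² = (λ_k² + μ_k²)²` and `d_{k+1}²`. Towards `k + 1` this
holds because `λ_k² = O(k)` while `μ_{k+1}⁴ ≍ k²`; towards `k` because `μ_{k+1}² ≤ 2 μ_k²` for
`k ≥ 1`, the case `k = 0` being covered by `λ_0² = d_0`.
-/

theorem tsum_sq_tridiagonal_le {a b d x : ℕ → ℝ} {C : ℝ} (hC : 0 ≤ C) (hb : b 0 = 0)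
    (h_left : ∀ k, (a k * b (k + 1)) ^ 2 ≤ C * d k ^ 2)
    (h_right : ∀ k, (a k * b (k + 1)) ^ 2 ≤ C * d (k + 1) ^ 2)
    (hx : Summable fun j => d j ^ 2 * x j ^ 2) :
    ∑' j, (a j * b (j + 1) * x (j + 1) + a (j - 1) * b j * x (j - 1)) ^ 2 ≤
      4 * C * ∑' j, d j ^ 2 * x j ^ 2 := by
  set G : ℕ → ℝ := fun j => d j ^ 2 * x j ^ 2
  set u : ℕ → ℝ := fun j => a j * b (j + 1) * x (j + 1)
  set v : ℕ → ℝ := fun j => a (j - 1) * b j * x (j - 1)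
  have hG : ∀ j, 0 ≤ G j := fun j => by positivity
  have hu : ∀ j, u j ^ 2 ≤ C * G (j + 1) := fun j => by
    simpa only [u, G, mul_pow, mul_assoc] using
      mul_le_mul_of_nonneg_right (h_right j) (sq_nonneg (x (j + 1)))
  have hv : ∀ j, v (j + 1) ^ 2 ≤ C * G j := fun j => by
    simpa only [v, G, Nat.add_sub_cancel, mul_pow, mul_assoc] using
      mul_le_mul_of_nonneg_right (h_left j) (sq_nonneg (x j))
  have hv₀ : v 0 = 0 := by simp [v, hb]
  have hG_shift : Summable fun j => G (j + 1) := (summable_nat_add_iff 1).mpr hx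
  have hu_sum : Summable fun j => u j ^ 2 :=
    .of_nonneg_of_le (fun _ => sq_nonneg _) hu (hG_shift.mul_left C)
  have hv_shift : Summable fun j => v (j + 1) ^ 2 :=
    .of_nonneg_of_le (fun _ => sq_nonneg _) hv (hx.mul_left C)
  have hv_sum : Summable fun j => v j ^ 2 := (summable_nat_add_iff 1).mp hv_shift
  have h_sq : ∀ j, (u j + v j) ^ 2 ≤ 2 * u j ^ 2 + 2 * v j ^ 2 := fun j => by
    linarith [add_sq_le (a := u j) (b := v j)]
  have h_bound_sum : Summable fun j => 2 * u j ^ 2 + 2 * v j ^ 2 :=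
    (hu_sum.mul_left 2).add (hv_sum.mul_left 2)
  have hu_tsum : ∑' j, u j ^ 2 ≤ C * ∑' j, G j := calc
    ∑' j, u j ^ 2 ≤ ∑' j, C * G (j + 1) := hu_sum.tsum_le_tsum hu (hG_shift.mul_left C)
    _ = C * ∑' j, G (j + 1) := tsum_mul_left
    _ ≤ C * ∑' j, G j := by
      refine mul_le_mul_of_nonneg_left ?_ hC
      rw [hx.tsum_eq_zero_add]
      linarith [hG 0]
  have hv_tsum : ∑' j, v j ^ 2 ≤ C * ∑' j, G j := calc
    ∑' j, v j ^ 2 = ∑' j, v (j + 1) ^ 2 := by rw [hv_sum.tsum_eq_zero_add, hv₀]; simp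
    _ ≤ ∑' j, C * G j := hv_shift.tsum_le_tsum hv (hx.mul_left C)
    _ = C * ∑' j, G j := tsum_mul_left
  calc ∑' j, (u j + v j) ^ 2
      ≤ ∑' j, (2 * u j ^ 2 + 2 * v j ^ 2) :=
        Summable.tsum_le_tsum h_sq (.of_nonneg_of_le (fun _ => sq_nonneg _) h_sq h_bound_sum)
          h_bound_sum
    _ = 2 * ∑' j, u j ^ 2 + 2 * ∑' j, v j ^ 2 := by
      rw [(hu_sum.mul_left 2).tsum_add (hv_sum.mul_left 2), tsum_mul_left, tsum_mul_left]
    _ ≤ 4 * C * ∑' j, G j := by linarith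

section Rates

variable {Nex ν : ℝ} (φ : ℝ)

lemma lam2_nonneg (hNex : 0 ≤ Nex) (hν : 0 ≤ ν) (k : ℕ) : 0 ≤ lam2 Nex ν φ k := by
  unfold lam2; positivity

lemma mu2_nonneg (hν : 0 ≤ ν) (k : ℕ) : 0 ≤ mu2 ν k := by
  unfold mu2; positivity

lemma lam2_le (hNex : 0 ≤ Nex) (k : ℕ) :
    lam2 Nex ν φ k ≤ (Nex + ν) * (k + 1) := by
  have := Real.sin_sq_le_one (φ * Real.sqrt (k + 1))
  unfold lam2
  nlinarith

lemma mu2_succ_le_two_mul (hν : 0 ≤ ν) {k : ℕ} (hk : 1 ≤ k) :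
    mu2 ν (k + 1) ≤ 2 * mu2 ν k := by
  have : (1 : ℝ) ≤ k := by exact_mod_cast hk
  unfold mu2; push_cast; nlinarith

lemma sq_lam_mul_mu_succ (hNex : 0 ≤ Nex) (hν : 0 ≤ ν) (k : ℕ) :
    (lam Nex ν φ k * mu ν (k + 1)) ^ 2 = lam2 Nex ν φ k * mu2 ν (k + 1) := by
  rw [mul_pow, lam, mu, Real.sq_sqrt (lam2_nonneg φ hNex hν k), Real.sq_sqrt (mu2_nonneg hν _)]

/-- The term `(ν + 1) / λ_0²` serves `k = 0`; if `λ_0 = 0` it is a junk value, but then the left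
side vanishes. -/
lemma lam2_mul_mu2_succ_le_left (hNex : 0 ≤ Nex) (hν : 0 ≤ ν) (k : ℕ) :
    lam2 Nex ν φ k * mu2 ν (k + 1) ≤
      (2 + (ν + 1) / lam2 Nex ν φ 0) * (lam2 Nex ν φ k + mu2 ν k) ^ 2 := by
  have hlam := lam2_nonneg φ hNex hν
  have hmu := mu2_nonneg hν
  rcases Nat.eq_zero_or_pos k with rfl | hk
  · have hmu₀ : mu2 ν 0 = 0 := by simp [mu2]
    have hmu₁ : mu2 ν 1 = ν + 1 := by simp [mu2]
    rw [hmu₀, hmu₁, add_zero]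
    rcases (hlam 0).eq_or_lt with h | h
    · rw [← h]; simp
    · have : (ν + 1) / lam2 Nex ν φ 0 * lam2 Nex ν φ 0 ^ 2 = (ν + 1) * lam2 Nex ν φ 0 := by
        field_simp
      nlinarith [sq_nonneg (lam2 Nex ν φ 0)]
  · have hdiv : 0 ≤ (ν + 1) / lam2 Nex ν φ 0 := by have := hlam 0; positivity
    calc lam2 Nex ν φ k * mu2 ν (k + 1)
        ≤ (lam2 Nex ν φ k + mu2 ν k) * (2 * (lam2 Nex ν φ k + mu2 ν k)) := by
          refine mul_le_mul (by linarith [hmu k]) ?_ (hmu _) (by linarith [hlam k, hmu k])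
          linarith [mu2_succ_le_two_mul hν hk, hlam k]
      _ ≤ (2 + (ν + 1) / lam2 Nex ν φ 0) * (lam2 Nex ν φ k + mu2 ν k) ^ 2 := by
          nlinarith [mul_nonneg hdiv (sq_nonneg (lam2 Nex ν φ k + mu2 ν k))]

lemma lam2_mul_mu2_succ_le_right (hNex : 0 ≤ Nex) (hν : 0 ≤ ν) (k : ℕ) :
    lam2 Nex ν φ k * mu2 ν (k + 1) ≤
      (Nex + ν) / (ν + 1) * (lam2 Nex ν φ (k + 1) + mu2 ν (k + 1)) ^ 2 := by
  have hμ : mu2 ν (k + 1) = (ν + 1) * (k + 1) := by simp [mu2]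
  calc lam2 Nex ν φ k * mu2 ν (k + 1)
      ≤ (Nex + ν) * (k + 1) * mu2 ν (k + 1) := by
        exact mul_le_mul_of_nonneg_right (lam2_le φ hNex k) (mu2_nonneg hν _)
    _ = (Nex + ν) / (ν + 1) * mu2 ν (k + 1) ^ 2 := by
        rw [hμ]; field_simp
    _ ≤ (Nex + ν) / (ν + 1) * (lam2 Nex ν φ (k + 1) + mu2 ν (k + 1)) ^ 2 := by
        have := lam2_nonneg φ hNex hν (k + 1)
        have := mu2_nonneg hν (k + 1)
        gcongr
        linarith

end Rates

/-- The off-diagonal part `B` of the restricted `L²`-generator, acting by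
`(Bx)_j = λ_j·μ_{j+1}·x_{j+1} + λ_{j−1}·μ_j·x_{j−1}`, is relatively bounded with respect to
its diagonal part `(Ax)_j = −(λ_j² + μ_j²)·x_j`: there is `b > 0` such that for every finitely
supported `x : ℕ → ℝ`,
`∑_j (λ_j μ_{j+1} x_{j+1} + λ_{j−1} μ_j x_{j−1})² ≤ b·∑_j (λ_j² + μ_j²)²·x_j²`.
(Conventions `λ_{−1} = 0`, `x_{−1} = 0`: since `μ_0 = 0`, the term
`λ_{j−1}·μ_j·x_{j−1}` vanishes automatically at `j = 0`, so the formula below, which uses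
truncated subtraction on `ℕ`, agrees with these conventions.) -/
theorem offdiag_relatively_bounded (Nex ν φ : ℝ) (hNex : 0 < Nex) (hν : 0 ≤ ν) :
    ∃ b : ℝ, 0 < b ∧ ∀ x : ℕ → ℝ, (Function.support x).Finite →
      ∑' j : ℕ,
          (lam Nex ν φ j * mu ν (j + 1) * x (j + 1) +
            lam Nex ν φ (j - 1) * mu ν j * x (j - 1)) ^ 2 ≤
        b * ∑' j : ℕ, (lam2 Nex ν φ j + mu2 ν j) ^ 2 * x j ^ 2 := by
  set c_left := 2 + (ν + 1) / lam2 Nex ν φ 0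
  set c_right := (Nex + ν) / (ν + 1)
  have h_left_nonneg : 0 ≤ c_left := by
    have := lam2_nonneg φ hNex.le hν 0; positivity
  have h_right_nonneg : 0 ≤ c_right := by positivity
  refine ⟨4 * (c_left + c_right), by positivity, fun x hx => ?_⟩
  refine tsum_sq_tridiagonal_le (by positivity) (by simp [mu, mu2]) (fun k => ?_) (fun k => ?_)
    (summable_of_hasFiniteSupport (hx.subset fun j hj hxj => hj (by simp [hxj])))
  · rw [sq_lam_mul_mu_succ φ hNex.le hν]
    nlinarith [lam2_mul_mu2_succ_le_left φ hNex.le hν k,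
      sq_nonneg (lam2 Nex ν φ k + mu2 ν k)]
  · rw [sq_lam_mul_mu_succ φ hNex.le hν]
    nlinarith [lam2_mul_mu2_succ_le_right φ hNex.le hν k,
      sq_nonneg (lam2 Nex ν φ (k + 1) + mu2 ν (k + 1))]
end
end
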